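/- arXiv:2303.03276 — 4 statements merged into one kernel-verified Lean document; each statement's English description precedes it below -/
import Mathlib

section
/- Let Σ ∈ ℝ^{n×n} be a positive semidefinite symmetric matrix, H ∈ ℝ^{m×n}, h ∈ ℝ^m, and Q ∈ ℝ^{m×m} a positive semidefinite symmetric matrix. Then the supremum, over all probability distributions μ on ℝ^n with finite second moment satisfying E_μ[ε] = 0 and E_μ[ε εᵀ] ⪯ Σ (Loewner order), of the expected quadratic cost E_μ[(Hε + h)ᵀ Q (Hε + h)] equals tr(Σ Hᵀ Q H) + hᵀ Q h, and this supremum is attained by any distribution μ with E_μ[ε] = 0 and E_μ[ε εᵀ] = Σ. -/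
open MeasureTheory Matrix
open scoped ENNReal

/-- The second-moment matrix `E_μ[ε εᵀ]` of a distribution `μ` on `ℝ^n`. -/
noncomputable def secondMomentMatrix {n : ℕ} (μ : Measure (Fin n → ℝ)) :
    Matrix (Fin n) (Fin n) ℝ :=
  Matrix.of fun i j => ∫ x, x i * x j ∂μ

namespace DRAux

lemma smm_transpose {n : ℕ} (μ : Measure (Fin n → ℝ)) :
    (secondMomentMatrix μ)ᵀ = secondMomentMatrix μ := by
  ext i j
  simp only [secondMomentMatrix, Matrix.transpose_apply, Matrix.of_apply]
  simp_rw [mul_comm]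

lemma affine_mul_expand {n : ℕ} (v w : Fin n → ℝ) (c d : ℝ) (x : Fin n → ℝ) :
    (∑ i, v i * x i + c) * (∑ j, w j * x j + d)
      = (∑ i, ∑ j, (v i * w j) * (x i * x j))
        + ((∑ i, (d * v i) * x i) + ((∑ j, (c * w j) * x j) + c * d)) := by
  have hAB : (∑ i, v i * x i) * (∑ j, w j * x j)
      = ∑ i, ∑ j, (v i * w j) * (x i * x j) := by
    rw [Finset.sum_mul]
    refine Finset.sum_congr rfl fun i _ => ?_
    rw [Finset.mul_sum]
    exact Finset.sum_congr rfl fun j _ => by ring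
  have hAd : (∑ i, v i * x i) * d = ∑ i, (d * v i) * x i := by
    rw [Finset.sum_mul]; exact Finset.sum_congr rfl fun i _ => by ring
  have hcB : c * (∑ j, w j * x j) = ∑ j, (c * w j) * x j := by
    rw [Finset.mul_sum]; exact Finset.sum_congr rfl fun j _ => by ring
  calc (∑ i, v i * x i + c) * (∑ j, w j * x j + d)
      = (∑ i, v i * x i) * (∑ j, w j * x j)
        + ((∑ i, v i * x i) * d + (c * (∑ j, w j * x j) + c * d)) := by ring
    _ = _ := by rw [hAB, hAd, hcB]

lemma integrable_affine_mul {n : ℕ} (μ : Measure (Fin n → ℝ)) [IsProbabilityMeasure μ]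
    (h1 : ∀ i, Integrable (fun x => x i) μ)
    (h2 : ∀ i j, Integrable (fun x => x i * x j) μ)
    (v w : Fin n → ℝ) (c d : ℝ) :
    Integrable (fun x : Fin n → ℝ => (∑ i, v i * x i + c) * (∑ j, w j * x j + d)) μ := by
  have hint : Integrable (fun x : Fin n → ℝ =>
      (∑ i, ∑ j, (v i * w j) * (x i * x j))
        + ((∑ i, (d * v i) * x i) + ((∑ j, (c * w j) * x j) + c * d))) μ := by
    refine Integrable.add ?_ (Integrable.add ?_ (Integrable.add ?_ (integrable_const _)))
    · exact integrable_finset_sum _ fun i _ =>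
        integrable_finset_sum _ fun j _ => (h2 i j).const_mul _
    · exact integrable_finset_sum _ fun i _ => (h1 i).const_mul _
    · exact integrable_finset_sum _ fun j _ => (h1 j).const_mul _
  exact hint.congr (ae_of_all _ fun x => (affine_mul_expand v w c d x).symm)

lemma integral_affine_mul {n : ℕ} (μ : Measure (Fin n → ℝ)) [IsProbabilityMeasure μ]
    (h1 : ∀ i, Integrable (fun x => x i) μ)
    (h2 : ∀ i j, Integrable (fun x => x i * x j) μ)
    (hm : ∀ i, ∫ x, x i ∂μ = 0)
    (v w : Fin n → ℝ) (c d : ℝ) :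
    ∫ x, (∑ i, v i * x i + c) * (∑ j, w j * x j + d) ∂μ
      = (∑ i, ∑ j, (v i * w j) * secondMomentMatrix μ i j) + c * d := by
  have i1 : Integrable (fun x : Fin n → ℝ => ∑ i, ∑ j, (v i * w j) * (x i * x j)) μ :=
    integrable_finset_sum _ fun i _ => integrable_finset_sum _ fun j _ => (h2 i j).const_mul _
  have i2 : Integrable (fun x : Fin n → ℝ => ∑ i, (d * v i) * x i) μ :=
    integrable_finset_sum _ fun i _ => (h1 i).const_mul _
  have i3 : Integrable (fun x : Fin n → ℝ => ∑ j, (c * w j) * x j) μ :=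
    integrable_finset_sum _ fun j _ => (h1 j).const_mul _
  have i5 : Integrable (fun x : Fin n → ℝ => (∑ j, (c * w j) * x j) + c * d) μ :=
    i3.add (integrable_const (c * d))
  have i4 : Integrable (fun x : Fin n → ℝ =>
      (∑ i, (d * v i) * x i) + ((∑ j, (c * w j) * x j) + c * d)) μ := i2.add i5
  simp only [affine_mul_expand v w c d]
  rw [integral_add i1 i4, integral_add i2 i5, integral_add i3 (integrable_const (c * d))]
  have e1 : ∫ x, ∑ i, ∑ j, (v i * w j) * (x i * x j) ∂μ
      = ∑ i, ∑ j, (v i * w j) * secondMomentMatrix μ i j := by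
    rw [integral_finset_sum _ (fun i _ =>
      integrable_finset_sum _ fun j _ => (h2 i j).const_mul _)]
    refine Finset.sum_congr rfl fun i _ => ?_
    rw [integral_finset_sum _ (fun j _ => (h2 i j).const_mul _)]
    refine Finset.sum_congr rfl fun j _ => ?_
    rw [integral_const_mul _ _]
    rfl
  have e2 : ∫ x, ∑ i, (d * v i) * x i ∂μ = 0 := by
    rw [integral_finset_sum _ (fun i _ => (h1 i).const_mul _)]
    simp only [integral_const_mul _ _]
    simp [hm]
  have e3 : ∫ x, ∑ j, (c * w j) * x j ∂μ = 0 := by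
    rw [integral_finset_sum _ (fun j _ => (h1 j).const_mul _)]
    simp only [integral_const_mul _ _]
    simp [hm]
  have e4 : ∫ _x, (c * d : ℝ) ∂μ = c * d := by simp
  rw [e1, e2, e3, e4]
  ring

lemma integral_cost {n m : ℕ} (H : Matrix (Fin m) (Fin n) ℝ) (h : Fin m → ℝ)
    (Q : Matrix (Fin m) (Fin m) ℝ)
    (μ : Measure (Fin n → ℝ)) [IsProbabilityMeasure μ]
    (h1 : ∀ i, Integrable (fun x => x i) μ)
    (h2 : ∀ i j, Integrable (fun x => x i * x j) μ)
    (hm : ∀ i, ∫ x, x i ∂μ = 0) :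
    ∫ x, (H.mulVec x + h) ⬝ᵥ Q.mulVec (H.mulVec x + h) ∂μ
      = (secondMomentMatrix μ * Hᵀ * Q * H).trace + h ⬝ᵥ Q.mulVec h := by
  set M := secondMomentMatrix μ with hMdef
  have hpt : ∀ x : Fin n → ℝ,
      (H.mulVec x + h) ⬝ᵥ Q.mulVec (H.mulVec x + h)
        = ∑ a, ∑ b, Q a b * ((∑ i, H a i * x i + h a) * (∑ j, H b j * x j + h b)) := by
    intro x
    simp only [dotProduct, mulVec, Pi.add_apply]
    refine Finset.sum_congr rfl fun a _ => ?_
    rw [Finset.mul_sum]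
    refine Finset.sum_congr rfl fun b _ => ?_
    ring
  simp only [hpt]
  rw [integral_finset_sum _ (fun a _ => integrable_finset_sum _ fun b _ =>
        (integrable_affine_mul μ h1 h2 (H a) (H b) (h a) (h b)).const_mul (Q a b))]
  have step : ∀ a : Fin m,
      ∫ x, ∑ b, Q a b * ((∑ i, H a i * x i + h a) * (∑ j, H b j * x j + h b)) ∂μ
        = ∑ b, Q a b * ((∑ i, ∑ j, (H a i * H b j) * M i j) + h a * h b) := by
    intro a
    rw [integral_finset_sum _ (fun b _ =>
      (integrable_affine_mul μ h1 h2 (H a) (H b) (h a) (h b)).const_mul (Q a b))]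
    refine Finset.sum_congr rfl fun b _ => ?_
    rw [integral_const_mul _ _, integral_affine_mul μ h1 h2 hm]
  rw [Finset.sum_congr rfl fun a _ => step a]
  -- Now pure algebra.
  set T := H * M * Hᵀ with hTdef
  have claim1 : ∀ a b, (∑ i, ∑ j, (H a i * H b j) * M i j) = T a b := by
    intro a b
    rw [hTdef, Matrix.mul_apply, Finset.sum_comm]
    refine Finset.sum_congr rfl fun j _ => ?_
    rw [Matrix.mul_apply, Matrix.transpose_apply, Finset.sum_mul]
    exact Finset.sum_congr rfl fun i _ => by ring
  have hT : Tᵀ = T := by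
    rw [hTdef, Matrix.transpose_mul, Matrix.transpose_mul, Matrix.transpose_transpose,
      smm_transpose μ, ← hMdef, ← Matrix.mul_assoc]
  have hTe : ∀ a b, T a b = T b a := by
    intro a b
    conv_lhs => rw [← hT]
    exact T.transpose_apply a b
  have claim2 : (∑ a, ∑ b, Q a b * T a b) = (M * Hᵀ * Q * H).trace := by
    have htr : (M * Hᵀ * Q * H).trace = (T * Q).trace := by
      rw [Matrix.trace_mul_comm, ← Matrix.mul_assoc, hTdef, ← Matrix.mul_assoc]
    rw [htr, Matrix.trace]
    rw [Finset.sum_comm]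
    refine Finset.sum_congr rfl fun b _ => ?_
    simp only [Matrix.diag_apply, Matrix.mul_apply]
    refine Finset.sum_congr rfl fun a _ => ?_
    rw [hTe a b]
    ring
  have claim3 : (∑ a, ∑ b, Q a b * (h a * h b)) = h ⬝ᵥ Q.mulVec h := by
    simp only [dotProduct, mulVec]
    refine Finset.sum_congr rfl fun a _ => ?_
    rw [Finset.mul_sum]
    exact Finset.sum_congr rfl fun b _ => by ring
  calc (∑ a, ∑ b, Q a b * ((∑ i, ∑ j, (H a i * H b j) * M i j) + h a * h b))
      = ∑ a, ∑ b, (Q a b * T a b + Q a b * (h a * h b)) := by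
        refine Finset.sum_congr rfl fun a _ => Finset.sum_congr rfl fun b _ => ?_
        rw [claim1 a b]; ring
    _ = (∑ a, ∑ b, Q a b * T a b) + (∑ a, ∑ b, Q a b * (h a * h b)) := by
        simp [Finset.sum_add_distrib]
    _ = (M * Hᵀ * Q * H).trace + h ⬝ᵥ Q.mulVec h := by rw [claim2, claim3]

lemma trace_psd_nonneg {n : ℕ} {A : Matrix (Fin n) (Fin n) ℝ} (hA : A.PosSemidef) :
    0 ≤ A.trace := by
  refine Finset.sum_nonneg fun i _ => ?_
  exact hA.diag_nonneg

lemma trace_mul_nonneg {n : ℕ} {A K : Matrix (Fin n) (Fin n) ℝ}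
    (hA : A.PosSemidef) (hK : K.PosSemidef) : 0 ≤ (A * K).trace := by
  obtain ⟨B, rfl⟩ : ∃ B : Matrix (Fin n) (Fin n) ℝ, _ = Bᴴ * B := by
    open scoped MatrixOrder in exact CStarAlgebra.nonneg_iff_eq_star_mul_self.mp hA.nonneg
  obtain ⟨C, rfl⟩ : ∃ C : Matrix (Fin n) (Fin n) ℝ, _ = Cᴴ * C := by
    open scoped MatrixOrder in exact CStarAlgebra.nonneg_iff_eq_star_mul_self.mp hK.nonneg
  have h1 : (Bᴴ * B * (Cᴴ * C)).trace = ((B * Cᴴ)ᴴ * (B * Cᴴ)).trace := by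
    rw [Matrix.conjTranspose_mul, Matrix.conjTranspose_conjTranspose]
    rw [show Bᴴ * B * (Cᴴ * C) = (Bᴴ * B * Cᴴ) * C by simp only [Matrix.mul_assoc]]
    rw [Matrix.trace_mul_comm]
    rw [show C * (Bᴴ * B * Cᴴ) = (C * Bᴴ) * (B * Cᴴ) by
      simp only [Matrix.mul_assoc]]
  rw [h1]
  exact trace_psd_nonneg (Matrix.posSemidef_conjTranspose_mul_self _)

lemma exists_attaining {n : ℕ} (Sig : Matrix (Fin n) (Fin n) ℝ) (hSig : Sig.PosSemidef) :
    ∃ μ : Measure (Fin n → ℝ), IsProbabilityMeasure μ ∧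
      (∀ i, Integrable (fun x => x i) μ) ∧
      (∀ i j, Integrable (fun x => x i * x j) μ) ∧
      (∀ i, ∫ x, x i ∂μ = 0) ∧
      secondMomentMatrix μ = Sig := by
  obtain ⟨B, hB⟩ : ∃ B : Matrix (Fin n) (Fin n) ℝ, Sig = Bᴴ * B := by
    open scoped MatrixOrder in exact CStarAlgebra.nonneg_iff_eq_star_mul_self.mp hSig.nonneg
  set s : ℝ := Real.sqrt (n + 1) with hs
  set C : Fin (n + 1) → Fin n → ℝ :=
    fun k i => if hk : (k : ℕ) < n then s * B ⟨k, hk⟩ i else 0 with hC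
  set c : ℝ≥0∞ := (((2 * (n + 1) : ℕ) : ℝ≥0∞))⁻¹ with hcdef
  have h20 : ((2 * (n + 1) : ℕ) : ℝ≥0∞) ≠ 0 := Nat.cast_ne_zero.mpr (by omega)
  have h2top : ((2 * (n + 1) : ℕ) : ℝ≥0∞) ≠ ⊤ := ENNReal.natCast_ne_top _
  have hc_ne_top : c ≠ ⊤ := by
    rw [hcdef]; exact ENNReal.inv_ne_top.mpr h20
  set ν : Fin (n + 1) → Measure (Fin n → ℝ) :=
    fun k => c • (Measure.dirac (C k) + Measure.dirac (-(C k))) with hν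
  have diracInt : ∀ (f : (Fin n → ℝ) → ℝ) (a : Fin n → ℝ),
      Integrable f (Measure.dirac a) := fun f a =>
    (integrable_const (f a)).congr (MeasureTheory.ae_eq_dirac f).symm
  have intAny : ∀ (f : (Fin n → ℝ) → ℝ) k, Integrable f (ν k) := fun f k =>
    (((diracInt f (C k)).add_measure (diracInt f (-(C k))))).smul_measure hc_ne_top
  have hctr : c.toReal = (2 * ((n : ℝ) + 1))⁻¹ := by
    rw [hcdef, ENNReal.toReal_inv, ENNReal.toReal_natCast]
    push_cast
    norm_num
  have hint : ∀ f : (Fin n → ℝ) → ℝ,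
      ∫ x, f x ∂(∑ k, ν k) = ∑ k, (2 * ((n : ℝ) + 1))⁻¹ * (f (C k) + f (-(C k))) := by
    intro f
    rw [MeasureTheory.integral_finset_sum_measure (fun k _ => intAny f k)]
    refine Finset.sum_congr rfl fun k _ => ?_
    rw [hν]
    rw [integral_smul_measure,
      integral_add_measure (diracInt f (C k)) (diracInt f (-(C k))),
      integral_dirac, integral_dirac, hctr]
    rw [smul_eq_mul]
  have hnpos : (0 : ℝ) < (n : ℝ) + 1 := by positivity
  refine ⟨∑ k, ν k, ?_, fun i => ?_, fun i j => ?_, fun i => ?_, ?_⟩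
  · constructor
    rw [Measure.finset_sum_apply]
    have hone : ∀ k : Fin (n + 1), ν k Set.univ = c * 2 := by
      intro k
      rw [hν]
      simp [Measure.smul_apply, Measure.add_apply, mul_two]
    rw [Finset.sum_congr rfl fun k _ => hone k]
    rw [Finset.sum_const, Finset.card_univ, Fintype.card_fin, nsmul_eq_mul]
    have hmul : ((n + 1 : ℕ) : ℝ≥0∞) * 2 = ((2 * (n + 1) : ℕ) : ℝ≥0∞) := by
      push_cast; ring
    rw [show ((n + 1 : ℕ) : ℝ≥0∞) * (c * 2) = (((n + 1 : ℕ) : ℝ≥0∞) * 2) * c by ring,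
      hmul, hcdef]
    exact ENNReal.mul_inv_cancel h20 h2top
  · exact MeasureTheory.integrable_finset_sum_measure.2 fun k _ => intAny _ k
  · exact MeasureTheory.integrable_finset_sum_measure.2 fun k _ => intAny _ k
  · rw [hint (fun x => x i)]
    simp
  · have hsum : ∀ i j : Fin n,
        (∑ k : Fin (n + 1), C k i * C k j) = ((n : ℝ) + 1) * Sig i j := by
      intro i j
      rw [Fin.sum_univ_castSucc]
      have hlast : C (Fin.last n) i * C (Fin.last n) j = 0 := by
        simp [hC, Fin.last]
      rw [hlast, add_zero]
      have hcast : ∀ l : Fin n, C l.castSucc i * C l.castSucc j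
          = ((n : ℝ) + 1) * (B l i * B l j) := by
        intro l
        have hval : ∀ hk : ((l.castSucc : Fin (n + 1)) : ℕ) < n,
            (⟨((l.castSucc : Fin (n + 1)) : ℕ), hk⟩ : Fin n) = l := by
          intro hk; ext; simp
        have h1 : C l.castSucc i = s * B l i := by
          simp only [hC]
          rw [dif_pos (by simpa using l.isLt), hval _]
        have h2 : C l.castSucc j = s * B l j := by
          simp only [hC]
          rw [dif_pos (by simpa using l.isLt), hval _]
        rw [h1, h2]
        have hss : s * s = (n : ℝ) + 1 := by
          rw [hs]
          exact Real.mul_self_sqrt (by positivity)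
        calc s * B l i * (s * B l j) = (s * s) * (B l i * B l j) := by ring
          _ = ((n : ℝ) + 1) * (B l i * B l j) := by rw [hss]
      rw [Finset.sum_congr rfl fun l _ => hcast l, ← Finset.mul_sum]
      congr 1
      rw [hB]
      simp only [Matrix.mul_apply, Matrix.conjTranspose_apply]
      exact Finset.sum_congr rfl fun l _ => by simp [mul_comm]
    ext i j
    show (∫ x, x i * x j ∂(∑ k, ν k)) = Sig i j
    rw [hint (fun x => x i * x j)]
    simp only [Pi.neg_apply, neg_mul_neg]
    have hterm : ∀ k : Fin (n + 1),
        (2 * ((n : ℝ) + 1))⁻¹ * (C k i * C k j + C k i * C k j)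
          = ((n : ℝ) + 1)⁻¹ * (C k i * C k j) := by
      intro k
      field_simp
      ring
    rw [Finset.sum_congr rfl fun k _ => hterm k, ← Finset.mul_sum, hsum i j]
    field_simp

end DRAux

/-- **Distributionally robust quadratic cost reformulation.**
The supremum, over all probability distributions `μ` on `ℝ^n` with finite second
moment, zero mean, and second-moment matrix dominated by `Σ` in the Loewner order,
of `E_μ[(Hε + h)ᵀ Q (Hε + h)]` equals `tr(Σ Hᵀ Q H) + hᵀ Q h`, and this value is
attained by any such distribution whose second-moment matrix equals `Σ`. -/
theorem drCostReformulation {n m : ℕ}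
    (Sig : Matrix (Fin n) (Fin n) ℝ) (hSig : Sig.PosSemidef)
    (H : Matrix (Fin m) (Fin n) ℝ) (h : Fin m → ℝ)
    (Q : Matrix (Fin m) (Fin m) ℝ) (hQ : Q.PosSemidef) :
    IsLUB
      { r : ℝ | ∃ μ : Measure (Fin n → ℝ), IsProbabilityMeasure μ ∧
          (∀ i, Integrable (fun x => x i) μ) ∧
          (∀ i j, Integrable (fun x => x i * x j) μ) ∧
          (∀ i, ∫ x, x i ∂μ = 0) ∧
          (Sig - secondMomentMatrix μ).PosSemidef ∧
          r = ∫ x, (H.mulVec x + h) ⬝ᵥ Q.mulVec (H.mulVec x + h) ∂μ }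
      ((Sig * Hᵀ * Q * H).trace + h ⬝ᵥ Q.mulVec h) ∧
    (∀ μ : Measure (Fin n → ℝ), IsProbabilityMeasure μ →
      (∀ i, Integrable (fun x => x i) μ) →
      (∀ i j, Integrable (fun x => x i * x j) μ) →
      (∀ i, ∫ x, x i ∂μ = 0) →
      secondMomentMatrix μ = Sig →
      ∫ x, (H.mulVec x + h) ⬝ᵥ Q.mulVec (H.mulVec x + h) ∂μ =
        (Sig * Hᵀ * Q * H).trace + h ⬝ᵥ Q.mulVec h) := by
  have hHQH : (Hᵀ * Q * H).PosSemidef := by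
    have := hQ.conjTranspose_mul_mul_same H
    rwa [Matrix.conjTranspose_eq_transpose_of_trivial] at this
  constructor
  · constructor
    · rintro r ⟨μ, hμp, h1, h2, hmean, hpsd, rfl⟩
      haveI := hμp
      rw [DRAux.integral_cost H h Q μ h1 h2 hmean]
      have key : 0 ≤ ((Sig - secondMomentMatrix μ) * (Hᵀ * Q * H)).trace :=
        DRAux.trace_mul_nonneg hpsd hHQH
      have expand : (Sig - secondMomentMatrix μ) * (Hᵀ * Q * H)
          = Sig * Hᵀ * Q * H - secondMomentMatrix μ * Hᵀ * Q * H := by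
        rw [Matrix.sub_mul]
        rw [Matrix.mul_assoc Sig, Matrix.mul_assoc Sig,
          Matrix.mul_assoc (secondMomentMatrix μ), Matrix.mul_assoc (secondMomentMatrix μ)]
      rw [expand, Matrix.trace_sub] at key
      linarith
    · intro b hb
      obtain ⟨μ, hμp, h1, h2, hmean, hsmm⟩ := DRAux.exists_attaining Sig hSig
      haveI := hμp
      refine hb ⟨μ, hμp, h1, h2, hmean, ?_, ?_⟩
      · rw [hsmm, sub_self]
        exact Matrix.PosSemidef.zero
      · rw [DRAux.integral_cost H h Q μ h1 h2 hmean, hsmm]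
  · intro μ hμp h1 h2 hmean hsmm
    haveI := hμp
    rw [DRAux.integral_cost H h Q μ h1 h2 hmean, hsmm]
end

section
/- Let Σ ∈ ℝ^{n×n} be a positive semidefinite symmetric matrix, a ∈ ℝ^n with σ² := aᵀ Σ a > 0, and b > 0. Then the infimum, over all probability distributions μ on ℝ^n with finite second moment satisfying E_μ[ε] = 0 and E_μ[ε εᵀ] ⪯ Σ (Loewner order), of P_μ(aᵀ ε ≤ b) equals b² / (b² + σ²). In particular, for every δ > 0 there exists such a distribution μ (supported on two points of the line spanned by Σa) with P_μ(aᵀ ε ≤ b) ≤ b²/(b² + σ²) + δ. -/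
open MeasureTheory Matrix


lemma cantelli_lb {n : ℕ} (Sig : Matrix (Fin n) (Fin n) ℝ)
    (a : Fin n → ℝ) (b : ℝ) (hb : 0 < b)
    (μ : Measure (Fin n → ℝ)) (hμ : IsProbabilityMeasure μ)
    (h1 : ∀ i, Integrable (fun x => x i) μ)
    (h2 : ∀ i j, Integrable (fun x => x i * x j) μ)
    (hmean : ∀ i, ∫ x, x i ∂μ = 0)
    (hdom : (Sig - Matrix.of fun i j => ∫ x, x i * x j ∂μ).PosSemidef) :
    b ^ 2 / (b ^ 2 + a ⬝ᵥ Sig.mulVec a) ≤ (μ {x | a ⬝ᵥ x ≤ b}).toReal := by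
  classical
  set Y : (Fin n → ℝ) → ℝ := fun x => a ⬝ᵥ x with hYdef
  have hYeq : ∀ x, Y x = ∑ i, a i * x i := fun x => rfl
  have hYmeas : Measurable Y := by
    have : Y = fun x => ∑ i, a i * x i := funext hYeq
    rw [this]
    exact Finset.measurable_sum _ fun i _ => by fun_prop
  have hYint : Integrable Y μ := by
    have : Integrable (fun x => ∑ i, a i * x i) μ :=
      integrable_finset_sum _ fun i _ => (h1 i).const_mul (a i)
    exact this.congr (Filter.Eventually.of_forall fun x => (hYeq x).symm)
  have hYmean : ∫ x, Y x ∂μ = 0 := by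
    have h0 : ∫ x, Y x ∂μ = ∫ x, ∑ i, a i * x i ∂μ :=
      integral_congr_ae (Filter.Eventually.of_forall fun x => hYeq x)
    have h1' : ∫ x, ∑ i, a i * x i ∂μ = ∑ i, ∫ x, a i * x i ∂μ :=
      integral_finset_sum _ fun i _ => (h1 i).const_mul (a i)
    rw [h0, h1']
    simp only [integral_const_mul, hmean, mul_zero, Finset.sum_const_zero]
  have hYsq : ∀ x, Y x ^ 2 = ∑ i, ∑ j, a i * a j * (x i * x j) := by
    intro x
    rw [sq, hYeq x, Finset.sum_mul_sum]
    exact Finset.sum_congr rfl fun i _ => Finset.sum_congr rfl fun j _ => by ring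
  have hY2int : Integrable (fun x => Y x ^ 2) μ := by
    have : Integrable (fun x => ∑ i, ∑ j, a i * a j * (x i * x j)) μ :=
      integrable_finset_sum _ fun i _ => integrable_finset_sum _ fun j _ =>
        (h2 i j).const_mul _
    exact this.congr (Filter.Eventually.of_forall fun x => (hYsq x).symm)
  set M : Matrix (Fin n) (Fin n) ℝ := Matrix.of fun i j => ∫ x, x i * x j ∂μ with hM
  set s : ℝ := a ⬝ᵥ M.mulVec a with hs
  have hs_eq : s = ∑ i, a i * ∑ j, (∫ x, x i * x j ∂μ) * a j := rfl
  have hY2 : ∫ x, Y x ^ 2 ∂μ = s := by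
    rw [integral_congr_ae (Filter.Eventually.of_forall hYsq)]
    have e1 : ∫ x, ∑ i, ∑ j, a i * a j * (x i * x j) ∂μ
        = ∑ i, ∫ x, ∑ j, a i * a j * (x i * x j) ∂μ :=
      integral_finset_sum _ fun i _ => integrable_finset_sum _ fun j _ => (h2 i j).const_mul _
    have e2 : ∀ i : Fin n, ∫ x, ∑ j, a i * a j * (x i * x j) ∂μ
        = ∑ j, a i * a j * ∫ x, x i * x j ∂μ := by
      intro i
      have := integral_finset_sum (μ := μ) Finset.univ
        (f := fun (j : Fin n) x => a i * a j * (x i * x j))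
        (fun j _ => (h2 i j).const_mul _)
      rw [this]
      exact Finset.sum_congr rfl fun j _ => integral_const_mul _ _
    rw [e1, Finset.sum_congr rfl fun i _ => e2 i, hs_eq]
    refine Finset.sum_congr rfl fun i _ => ?_
    rw [Finset.mul_sum]
    exact Finset.sum_congr rfl fun j _ => by ring
  have hs0 : 0 ≤ s := by
    rw [← hY2]; exact integral_nonneg fun x => sq_nonneg _
  have hssig : s ≤ a ⬝ᵥ Sig.mulVec a := by
    have := hdom.dotProduct_mulVec_nonneg a
    simp only [star_trivial, sub_mulVec, dotProduct_sub] at this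
    linarith
  set u : ℝ := s / b with hu
  have hu0 : 0 ≤ u := div_nonneg hs0 hb.le
  have hbu : 0 < b + u := by linarith
  have haux : Integrable (fun x => Y x ^ 2 + 2 * u * Y x) μ := by
    exact hY2int.add (hYint.const_mul _)
  have hgint : Integrable (fun x => (Y x + u) ^ 2) μ := by
    have : Integrable (fun x => Y x ^ 2 + 2 * u * Y x + u ^ 2) μ :=
      haux.add (integrable_const _)
    exact this.congr (Filter.Eventually.of_forall fun x => by ring)
  have hgval : ∫ x, (Y x + u) ^ 2 ∂μ = s + u ^ 2 := by
    have h0 : ∫ x, (Y x + u) ^ 2 ∂μ = ∫ x, (Y x ^ 2 + 2 * u * Y x + u ^ 2) ∂μ :=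
      integral_congr_ae (Filter.Eventually.of_forall fun x => by ring)
    have ha2 : ∫ x, (Y x ^ 2 + 2 * u * Y x + u ^ 2) ∂μ
        = (∫ x, (Y x ^ 2 + 2 * u * Y x) ∂μ) + ∫ _x, u ^ 2 ∂μ :=
      integral_add haux (integrable_const _)
    have ha3 : ∫ x, (Y x ^ 2 + 2 * u * Y x) ∂μ
        = (∫ x, Y x ^ 2 ∂μ) + ∫ x, 2 * u * Y x ∂μ :=
      integral_add hY2int (hYint.const_mul _)
    rw [h0, ha2, ha3, integral_const_mul, hYmean, hY2, integral_const, probReal_univ]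
    simp
  have hmarkov : (b + u) ^ 2 * (μ {x | (b + u) ^ 2 ≤ (Y x + u) ^ 2}).toReal
      ≤ s + u ^ 2 := by
    rw [← hgval]
    exact mul_meas_ge_le_integral_of_nonneg
      (Filter.Eventually.of_forall fun x => sq_nonneg _) hgint _
  have hsubset : {x | b < Y x} ⊆ {x | (b + u) ^ 2 ≤ (Y x + u) ^ 2} := by
    intro x hx
    have : b + u ≤ Y x + u := by simp only [Set.mem_setOf_eq] at hx; linarith
    exact pow_le_pow_left₀ hbu.le this 2
  have hmono : (μ {x | b < Y x}).toReal ≤ (μ {x | (b + u) ^ 2 ≤ (Y x + u) ^ 2}).toReal :=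
    ENNReal.toReal_mono (measure_ne_top μ _) (measure_mono hsubset)
  have hPub : (μ {x | b < Y x}).toReal ≤ s / (s + b ^ 2) := by
    have h1' : (b + u) ^ 2 * (μ {x | b < Y x}).toReal ≤ s + u ^ 2 :=
      le_trans (mul_le_mul_of_nonneg_left hmono (by positivity)) hmarkov
    have hkey : (s + u ^ 2) / (b + u) ^ 2 = s / (s + b ^ 2) := by
      rw [hu, div_eq_div_iff (by positivity) (by positivity)]
      field_simp
      ring
    rw [← hkey, le_div_iff₀ (by positivity)]
    linarith [h1']
  have hSmeas : MeasurableSet {x : Fin n → ℝ | Y x ≤ b} := measurableSet_le hYmeas measurable_const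
  have hcompl : {x : Fin n → ℝ | Y x ≤ b}ᶜ = {x | b < Y x} := by
    ext x; simp [not_le]
  have hPS : (μ {x | Y x ≤ b}).toReal = 1 - (μ {x | b < Y x}).toReal := by
    have h2' : μ {x | b < Y x} = 1 - μ {x | Y x ≤ b} := by
      rw [← hcompl]; exact prob_compl_eq_one_sub hSmeas
    have h3' : (μ {x | b < Y x}).toReal = 1 - (μ {x | Y x ≤ b}).toReal := by
      rw [h2', ENNReal.toReal_sub_of_le prob_le_one ENNReal.one_ne_top, ENNReal.toReal_one]
    linarith
  have hid : 1 - s / (s + b ^ 2) = b ^ 2 / (b ^ 2 + s) := by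
    field_simp
    ring
  have hfinal : b ^ 2 / (b ^ 2 + a ⬝ᵥ Sig.mulVec a) ≤ b ^ 2 / (b ^ 2 + s) :=
    div_le_div_of_nonneg_left (by positivity) (by positivity) (by linarith)
  have hlast : b ^ 2 / (b ^ 2 + s) ≤ (μ {x | Y x ≤ b}).toReal := by
    rw [hPS]; linarith
  exact le_trans hfinal hlast


lemma integrable_dirac'' {α E : Type*} [MeasurableSpace α] [MeasurableSingletonClass α]
    [NormedAddCommGroup E] (f : α → E) (x : α) : Integrable f (Measure.dirac x) :=
  (integrable_const (f x)).congr (ae_eq_dirac f).symm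

lemma twopoint {n : ℕ} (p₁ p₂ : Fin n → ℝ) (q : ℝ) (hq0 : 0 < q) (hq1 : q < 1) :
    ∃ μ : Measure (Fin n → ℝ), IsProbabilityMeasure μ ∧
      (∀ f : (Fin n → ℝ) → ℝ, Integrable f μ) ∧
      (∀ f : (Fin n → ℝ) → ℝ, ∫ x, f x ∂μ = q * f p₁ + (1 - q) * f p₂) ∧
      (∀ S : Set (Fin n → ℝ), MeasurableSet S → p₁ ∉ S → p₂ ∈ S →
        μ S = ENNReal.ofReal (1 - q)) ∧
      (∀ S : Set (Fin n → ℝ), MeasurableSet S → p₁ ∈ S → p₂ ∈ S → μ Sᶜ = 0) := by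
  classical
  set μ : Measure (Fin n → ℝ) :=
    ENNReal.ofReal q • Measure.dirac p₁ + ENNReal.ofReal (1 - q) • Measure.dirac p₂ with hμdef
  have hq1' : (0:ℝ) ≤ 1 - q := by linarith
  refine ⟨μ, ?_, ?_, ?_, ?_, ?_⟩
  · constructor
    rw [hμdef]
    simp only [Measure.add_apply, Measure.smul_apply, measure_univ, smul_eq_mul, mul_one]
    rw [← ENNReal.ofReal_add hq0.le hq1']
    norm_num
  · intro f
    exact ((integrable_dirac'' f p₁).smul_measure ENNReal.ofReal_ne_top).add_measure
      ((integrable_dirac'' f p₂).smul_measure ENNReal.ofReal_ne_top)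
  · intro f
    rw [hμdef, integral_add_measure
      ((integrable_dirac'' f p₁).smul_measure ENNReal.ofReal_ne_top)
      ((integrable_dirac'' f p₂).smul_measure ENNReal.ofReal_ne_top),
      integral_smul_measure, integral_smul_measure, integral_dirac, integral_dirac,
      ENNReal.toReal_ofReal hq0.le, ENNReal.toReal_ofReal hq1']
    simp [smul_eq_mul]
  · intro S hS h1 h2
    rw [hμdef]
    simp only [Measure.add_apply, Measure.smul_apply, smul_eq_mul]
    rw [Measure.dirac_apply' _ hS, Measure.dirac_apply' _ hS]
    rw [Set.indicator_of_notMem h1, Set.indicator_of_mem h2]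
    simp
  · intro S hS h1 h2
    rw [hμdef]
    simp only [Measure.add_apply, Measure.smul_apply, smul_eq_mul]
    rw [Measure.dirac_apply' _ hS.compl, Measure.dirac_apply' _ hS.compl]
    rw [Set.indicator_of_notMem (by simpa using h1), Set.indicator_of_notMem (by simpa using h2)]
    simp

lemma exists_mu {n : ℕ}
    (Sig : Matrix (Fin n) (Fin n) ℝ) (hSig : Sig.PosSemidef)
    (a : Fin n → ℝ) (hvar : 0 < a ⬝ᵥ Sig.mulVec a)
    (b : ℝ) (hb : 0 < b) (δ : ℝ) (hδ : 0 < δ) :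
    ∃ μ : Measure (Fin n → ℝ), IsProbabilityMeasure μ ∧
      (∀ i, Integrable (fun x => x i) μ) ∧
      (∀ i j, Integrable (fun x => x i * x j) μ) ∧
      (∀ i, ∫ x, x i ∂μ = 0) ∧
      (Sig - Matrix.of fun i j => ∫ x, x i * x j ∂μ).PosSemidef ∧
      (∃ t₁ t₂ : ℝ, ∀ᵐ x ∂μ, x = t₁ • Sig.mulVec a ∨ x = t₂ • Sig.mulVec a) ∧
      (μ {x | a ⬝ᵥ x ≤ b}).toReal ≤ b ^ 2 / (b ^ 2 + a ⬝ᵥ Sig.mulVec a) + δ := by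
  classical
  set v : Fin n → ℝ := Sig.mulVec a with hv
  set σ2 : ℝ := a ⬝ᵥ v with hσ2
  have hσ2pos : 0 < σ2 := hvar
  set c : ℝ := Real.sqrt (b ^ 2 + δ * (σ2 + b ^ 2)) with hc
  have hc2 : c ^ 2 = b ^ 2 + δ * (σ2 + b ^ 2) := Real.sq_sqrt (by positivity)
  have hcb : b < c := by
    have hbc2 : b ^ 2 < c ^ 2 := by rw [hc2]; nlinarith
    have hc0' : (0:ℝ) ≤ c := Real.sqrt_nonneg _
    exact lt_of_pow_lt_pow_left₀ 2 hc0' hbc2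
  have hc0 : 0 < c := lt_trans hb hcb
  set q : ℝ := σ2 / (σ2 + c ^ 2) with hq
  have hden : 0 < σ2 + c ^ 2 := by positivity
  have hq0 : 0 < q := by positivity
  have hq1 : q < 1 := by
    rw [hq, div_lt_one hden]; nlinarith
  set t₁ : ℝ := c / σ2 with ht₁
  set t₂ : ℝ := -1 / c with ht₂
  set p₁ : Fin n → ℝ := t₁ • v with hp₁
  set p₂ : Fin n → ℝ := t₂ • v with hp₂
  obtain ⟨μ, hprob, hint, hI, hmeasS, hcompl0⟩ := twopoint p₁ p₂ q hq0 hq1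
  have hcoef : q * t₁ + (1 - q) * t₂ = 0 := by
    rw [hq, ht₁, ht₂]
    field_simp
    ring
  have hE2 : q * t₁ ^ 2 + (1 - q) * t₂ ^ 2 = 1 / σ2 := by
    rw [hq, ht₁, ht₂]
    field_simp
    ring
  have hMij : ∀ i j, (∫ x, x i * x j ∂μ) = v i * v j / σ2 := by
    intro i j
    rw [hI fun x => x i * x j]
    have e1 : p₁ i = t₁ * v i := rfl
    have e2 : p₂ i = t₂ * v i := rfl
    have e3 : p₁ j = t₁ * v j := rfl
    have e4 : p₂ j = t₂ * v j := rfl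
    rw [e1, e2, e3, e4]
    have : q * (t₁ * v i * (t₁ * v j)) + (1 - q) * (t₂ * v i * (t₂ * v j))
        = (q * t₁ ^ 2 + (1 - q) * t₂ ^ 2) * (v i * v j) := by ring
    rw [this, hE2]
    ring
  have hsym : ∀ i j, Sig i j = Sig j i := by
    intro i j
    have := congrFun (congrFun hSig.1 i) j
    simpa [Matrix.conjTranspose_apply] using this.symm
  have hswap : ∀ y : Fin n → ℝ, a ⬝ᵥ Sig.mulVec y = y ⬝ᵥ v := by
    intro y
    show ∑ i, a i * ∑ j, Sig i j * y j = ∑ i, y i * ∑ j, Sig i j * a j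
    calc ∑ i, a i * ∑ j, Sig i j * y j = ∑ i, ∑ j, a i * (Sig i j * y j) := by
          exact Finset.sum_congr rfl fun i _ => Finset.mul_sum _ _ _
      _ = ∑ j, ∑ i, a i * (Sig i j * y j) := Finset.sum_comm
      _ = ∑ j, ∑ i, y j * (Sig j i * a i) := by
          exact Finset.sum_congr rfl fun j _ => Finset.sum_congr rfl fun i _ => by
            rw [hsym i j]; ring
      _ = ∑ i, y i * ∑ j, Sig i j * a j := by
          exact Finset.sum_congr rfl fun j _ => (Finset.mul_sum _ _ _).symm
  have hCS : ∀ y : Fin n → ℝ, (y ⬝ᵥ v) ^ 2 / σ2 ≤ y ⬝ᵥ Sig.mulVec y := by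
    intro y
    set r : ℝ := y ⬝ᵥ v with hr
    have hquad := hSig.dotProduct_mulVec_nonneg (σ2 • y - r • a)
    rw [star_trivial] at hquad
    simp only [Matrix.mulVec_sub, Matrix.mulVec_smul, dotProduct_sub,
      sub_dotProduct, dotProduct_smul, smul_dotProduct, smul_eq_mul] at hquad
    have h1 : y ⬝ᵥ Sig.mulVec a = r := rfl
    have h2 : a ⬝ᵥ Sig.mulVec y = r := by rw [hswap y]
    have h3 : a ⬝ᵥ Sig.mulVec a = σ2 := rfl
    rw [h1, h2, h3] at hquad
    rw [div_le_iff₀ hσ2pos]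
    nlinarith [hquad]
  have hPSD : (Sig - Matrix.of fun i j => ∫ x, x i * x j ∂μ).PosSemidef := by
    refine Matrix.PosSemidef.of_dotProduct_mulVec_nonneg ?_ ?_
    · have hMherm : (Matrix.of fun i j => ∫ x, x i * x j ∂μ).IsHermitian := by
        ext i j
        simp only [Matrix.conjTranspose_apply, Matrix.of_apply, star_trivial]
        rw [hMij j i, hMij i j]; ring
      exact (Matrix.IsHermitian.sub hSig.1 hMherm)
    · intro y
      rw [star_trivial, sub_mulVec, dotProduct_sub]
      have hyM : y ⬝ᵥ (Matrix.of fun i j => ∫ x, x i * x j ∂μ).mulVec y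
          = (y ⬝ᵥ v) ^ 2 / σ2 := by
        show ∑ i, y i * ∑ j, (∫ x, x i * x j ∂μ) * y j = _
        have e : ∀ i, ∑ j, (∫ x, x i * x j ∂μ) * y j = v i * (∑ j, y j * v j) / σ2 := by
          intro i
          rw [Finset.mul_sum, Finset.sum_div]
          exact Finset.sum_congr rfl fun j _ => by rw [hMij i j]; ring
        calc ∑ i, y i * ∑ j, (∫ x, x i * x j ∂μ) * y j
            = ∑ i, y i * (v i * (∑ j, y j * v j) / σ2) :=
              Finset.sum_congr rfl fun i _ => by rw [e i]
          _ = (∑ i, y i * v i) * (∑ j, y j * v j) / σ2 := by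
              rw [Finset.sum_congr rfl (fun i (_ : i ∈ Finset.univ) =>
                (by ring : y i * (v i * (∑ j, y j * v j) / σ2)
                  = y i * v i * (∑ j, y j * v j) / σ2)), ← Finset.sum_div, ← Finset.sum_mul]
          _ = (y ⬝ᵥ v) ^ 2 / σ2 := by
              have : y ⬝ᵥ v = ∑ i, y i * v i := rfl
              rw [this]; ring
      rw [hyM]
      have := hCS y
      linarith
  refine ⟨μ, hprob, fun i => hint _, fun i j => hint _, ?_, hPSD, ⟨t₁, t₂, ?_⟩, ?_⟩
  · intro i
    rw [hI fun x => x i]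
    have e1 : p₁ i = t₁ * v i := rfl
    have e2 : p₂ i = t₂ * v i := rfl
    rw [e1, e2]
    have : q * (t₁ * v i) + (1 - q) * (t₂ * v i) = (q * t₁ + (1 - q) * t₂) * v i := by ring
    rw [this, hcoef, zero_mul]
  · rw [ae_iff]
    have hTset : {x : Fin n → ℝ | ¬(x = t₁ • Sig.mulVec a ∨ x = t₂ • Sig.mulVec a)}
        = ({p₁} ∪ {p₂} : Set (Fin n → ℝ))ᶜ := by
      ext x
      simp only [Set.mem_setOf_eq, Set.mem_compl_iff, Set.mem_union, Set.mem_singleton_iff]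
      exact Iff.rfl
    rw [hTset]
    exact hcompl0 _ ((measurableSet_singleton p₁).union (measurableSet_singleton p₂))
      (Or.inl rfl) (Or.inr rfl)
  · have hSmeas : MeasurableSet {x : Fin n → ℝ | a ⬝ᵥ x ≤ b} := by
      apply measurableSet_le _ measurable_const
      exact Finset.measurable_sum _ fun i _ => by fun_prop
    have hap₁ : a ⬝ᵥ p₁ = c := by
      rw [hp₁, dotProduct_smul, smul_eq_mul, ← hσ2, ht₁]
      field_simp
    have hap₂ : a ⬝ᵥ p₂ = -σ2 / c := by
      rw [hp₂, dotProduct_smul, smul_eq_mul, ← hσ2, ht₂]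
      ring
    have h1 : p₁ ∉ {x : Fin n → ℝ | a ⬝ᵥ x ≤ b} := by
      simp only [Set.mem_setOf_eq, hap₁, not_le]; exact hcb
    have h2 : p₂ ∈ {x : Fin n → ℝ | a ⬝ᵥ x ≤ b} := by
      simp only [Set.mem_setOf_eq, hap₂]
      have : -σ2 / c < 0 := by
        apply div_neg_of_neg_of_pos (by linarith) hc0
      linarith
    rw [hmeasS _ hSmeas h1 h2, ENNReal.toReal_ofReal (by linarith)]
    have hq1' : 1 - q = c ^ 2 / (σ2 + c ^ 2) := by
      rw [hq]; field_simp; ring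
    rw [hq1']
    have step1 : c ^ 2 / (σ2 + c ^ 2) ≤ c ^ 2 / (σ2 + b ^ 2) := by
      apply div_le_div_of_nonneg_left (by positivity) (by positivity) (by nlinarith)
    have step2 : c ^ 2 / (σ2 + b ^ 2) = b ^ 2 / (b ^ 2 + σ2) + δ := by
      rw [hc2]
      field_simp
      ring
    linarith



/-- **Sharpness of the Cantelli-type bound.**
For a positive semidefinite `Σ`, `a` with `σ² := aᵀ Σ a > 0` and `b > 0`, the
infimum, over all probability distributions on `ℝ^n` with finite second moment,
zero mean, and second-moment matrix dominated by `Σ` in the Loewner order, of the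
probability of the half-space `{ε : aᵀ ε ≤ b}` equals `b² / (b² + σ²)`; in
particular, for every `δ > 0` there is such a distribution, supported on two
points of the line spanned by `Σ a`, whose half-space probability is at most
`b²/(b² + σ²) + δ`. -/
theorem halfspace_prob_infimum {n : ℕ}
    (Sig : Matrix (Fin n) (Fin n) ℝ) (hSig : Sig.PosSemidef)
    (a : Fin n → ℝ) (hvar : 0 < a ⬝ᵥ Sig.mulVec a)
    (b : ℝ) (hb : 0 < b) :
    IsGLB
      { r : ℝ | ∃ μ : Measure (Fin n → ℝ), IsProbabilityMeasure μ ∧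
          (∀ i, Integrable (fun x => x i) μ) ∧
          (∀ i j, Integrable (fun x => x i * x j) μ) ∧
          (∀ i, ∫ x, x i ∂μ = 0) ∧
          (Sig - Matrix.of fun i j => ∫ x, x i * x j ∂μ).PosSemidef ∧
          r = (μ {x | a ⬝ᵥ x ≤ b}).toReal }
      (b ^ 2 / (b ^ 2 + a ⬝ᵥ Sig.mulVec a)) ∧
    (∀ δ > (0 : ℝ), ∃ μ : Measure (Fin n → ℝ), IsProbabilityMeasure μ ∧
      (∀ i, Integrable (fun x => x i) μ) ∧
      (∀ i j, Integrable (fun x => x i * x j) μ) ∧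
      (∀ i, ∫ x, x i ∂μ = 0) ∧
      (Sig - Matrix.of fun i j => ∫ x, x i * x j ∂μ).PosSemidef ∧
      (∃ t₁ t₂ : ℝ, ∀ᵐ x ∂μ, x = t₁ • Sig.mulVec a ∨ x = t₂ • Sig.mulVec a) ∧
      (μ {x | a ⬝ᵥ x ≤ b}).toReal ≤ b ^ 2 / (b ^ 2 + a ⬝ᵥ Sig.mulVec a) + δ) := by

  constructor
  · constructor
    · rintro r ⟨μ, hprob, h1, h2, hmean, hdom, rfl⟩
      exact cantelli_lb Sig a b hb μ hprob h1 h2 hmean hdom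
    · intro cLB hc
      apply le_of_forall_pos_le_add
      intro δ hδ
      obtain ⟨μ, hprob, h1, h2, hmean, hdom, _, hP⟩ := exists_mu Sig hSig a hvar b hb δ hδ
      exact le_trans (hc ⟨μ, hprob, h1, h2, hmean, hdom, rfl⟩) hP
  · intro δ hδ
    exact exists_mu Sig hSig a hvar b hb δ hδ
end

section
/- Let Σ ∈ ℝ^{n×n} be a positive semidefinite symmetric matrix, a ∈ ℝ^n, b ∈ ℝ, and p ∈ (0,1). Then P_μ(aᵀ ε ≤ b) ≥ p holds for every probability distribution μ on ℝ^n with finite second moment satisfying E_μ[ε] = 0 and E_μ[ε εᵀ] ⪯ Σ (Loewner order) if and only if b ≥ √(p/(1−p)) · √(aᵀ Σ a). -/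
open MeasureTheory Matrix
open scoped ENNReal

/-- Any measurable real function is integrable with respect to a Dirac measure. -/
lemma aux_integrable_dirac {α} [MeasurableSpace α] {f : α → ℝ} (hf : Measurable f) (v : α) :
    Integrable f (Measure.dirac v) := by
  refine ⟨hf.aestronglyMeasurable, ?_⟩
  rw [HasFiniteIntegral, lintegral_dirac' _ hf.enorm]
  exact enorm_lt_top

/-- Integral against a two-point measure. -/
lemma aux_integral_two_point {α} [MeasurableSpace α]
    {f : α → ℝ} (hf : Measurable f) (c d : ℝ≥0∞) (hc : c ≠ ⊤) (hd : d ≠ ⊤) (v w : α) :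
    ∫ x, f x ∂(c • Measure.dirac v + d • Measure.dirac w)
      = c.toReal * f v + d.toReal * f w := by
  rw [integral_add_measure ((aux_integrable_dirac hf v).smul_measure hc)
    ((aux_integrable_dirac hf w).smul_measure hd), integral_smul_measure, integral_smul_measure,
    integral_dirac' _ _ hf.stronglyMeasurable, integral_dirac' _ _ hf.stronglyMeasurable]
  simp [smul_eq_mul]

open scoped MatrixOrder in
/-- Cauchy–Schwarz for a PSD matrix. -/
lemma aux_psd_cs {n : ℕ} {S : Matrix (Fin n) (Fin n) ℝ} (hS : S.PosSemidef)
    (a x : Fin n → ℝ) : (x ⬝ᵥ S *ᵥ a)^2 ≤ (x ⬝ᵥ S *ᵥ x) * (a ⬝ᵥ S *ᵥ a) := by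
  obtain ⟨B, rfl⟩ := CStarAlgebra.nonneg_iff_eq_star_mul_self.mp hS.nonneg
  rw [Matrix.star_eq_conjTranspose]
  have h : ∀ v w : Fin n → ℝ, v ⬝ᵥ (Bᴴ * B) *ᵥ w = (B *ᵥ v) ⬝ᵥ (B *ᵥ w) := by
    intro v w
    rw [← Matrix.mulVec_mulVec, Matrix.dotProduct_mulVec]
    simp [Matrix.conjTranspose_eq_transpose_of_trivial, Matrix.vecMul_transpose]
  rw [h, h, h]
  have := Finset.sum_mul_sq_le_sq_mul_sq Finset.univ (B *ᵥ x) (B *ᵥ a)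
  simpa [dotProduct, sq, mul_pow] using this

set_option maxHeartbeats 2000000 in
/-- **Distributionally robust linear chance constraint ⟺ second-order cone condition.**
(Calafiore–El Ghaoui, Thm. 3.1.) For a positive semidefinite `Σ`, `a ∈ ℝ^n`,
`b ∈ ℝ` and `p ∈ (0,1)`: every probability distribution on `ℝ^n` with finite
second moment, zero mean, and second-moment matrix dominated by `Σ` in the
Loewner order assigns probability at least `p` to `{ε : aᵀ ε ≤ b}` if and only if
`b ≥ √(p/(1−p)) · √(aᵀ Σ a)`. -/
theorem dr_chance_constraint_iff_soc {n : ℕ}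
    (Sig : Matrix (Fin n) (Fin n) ℝ) (hSig : Sig.PosSemidef)
    (a : Fin n → ℝ) (b : ℝ) (p : ℝ) (hp0 : 0 < p) (hp1 : p < 1) :
    (∀ μ : Measure (Fin n → ℝ), IsProbabilityMeasure μ →
      (∀ i, Integrable (fun x => x i) μ) →
      (∀ i j, Integrable (fun x => x i * x j) μ) →
      (∀ i, ∫ x, x i ∂μ = 0) →
      (Sig - Matrix.of fun i j => ∫ x, x i * x j ∂μ).PosSemidef →
      p ≤ (μ {x | a ⬝ᵥ x ≤ b}).toReal) ↔
    Real.sqrt (p / (1 - p)) * Real.sqrt (a ⬝ᵥ Sig.mulVec a) ≤ b := by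
  have hp1' : (0:ℝ) < 1 - p := by linarith
  have hs0 : 0 ≤ a ⬝ᵥ Sig *ᵥ a := by simpa using hSig.dotProduct_mulVec_nonneg a
  set s : ℝ := a ⬝ᵥ Sig *ᵥ a with hs_def
  have hpi : ∀ i : Fin n, Measurable fun x : Fin n → ℝ => x i := fun i => measurable_pi_apply i
  have hpij : ∀ i j : Fin n, Measurable fun x : Fin n → ℝ => x i * x j :=
    fun i j => (hpi i).mul (hpi j)
  have hYm : Measurable (fun x : Fin n → ℝ => a ⬝ᵥ x) := by
    simp only [dotProduct]
    exact Finset.measurable_sum _ fun i _ => (hpi i).const_mul (a i)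
  have hSetm : MeasurableSet {x : Fin n → ℝ | a ⬝ᵥ x ≤ b} :=
    measurableSet_le hYm measurable_const
  constructor
  · -- chance constraint for all μ → SOC, by contraposition
    intro H
    by_contra hb
    push_neg at hb
    rcases lt_or_ge b 0 with hbneg | hb0
    · -- Dirac at 0 violates the constraint
      have := H (Measure.dirac 0) inferInstance
        (fun i => aux_integrable_dirac (hpi i) 0)
        (fun i j => aux_integrable_dirac (hpij i j) 0)
        (fun i => by
          rw [integral_dirac' (fun x : Fin n → ℝ => x i) 0 (hpi i).stronglyMeasurable]; rfl)
        (by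
          have : (Matrix.of fun i j => ∫ x : Fin n → ℝ, x i * x j ∂Measure.dirac 0) = 0 := by
            ext i j
            rw [Matrix.of_apply,
              integral_dirac' (fun x : Fin n → ℝ => x i * x j) 0 (hpij i j).stronglyMeasurable]
            simp
          rw [this, sub_zero]
          exact hSig)
      rw [Measure.dirac_apply' _ hSetm] at this
      have h0 : (0 : Fin n → ℝ) ∉ {x : Fin n → ℝ | a ⬝ᵥ x ≤ b} := by
        simp [Set.mem_setOf_eq, not_le, hbneg]
      rw [Set.indicator_of_notMem h0] at this
      simp at this
      linarith
    · -- 0 ≤ b < √(p/(1-p)) √s : two-point worst case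
      have hs1 : 0 < s := by
        rcases lt_or_eq_of_le hs0 with h | h
        · exact h
        · exfalso
          rw [← h] at hb
          simp [Real.sqrt_eq_zero'] at hb
          linarith
      -- b² (1-p) < p s
      have hbb : b < Real.sqrt (p / (1-p) * s) := by
        rwa [Real.sqrt_mul (by positivity)]
      have hb2 : b^2 < p / (1-p) * s := (Real.lt_sqrt hb0).mp hbb
      set q : ℝ := (p + b^2/(s+b^2))/2 with hq_def
      have hsb : 0 < s + b^2 := by positivity
      have hb2' : b^2 * (1-p) < p * s := by
        rw [div_mul_eq_mul_div, lt_div_iff₀ hp1'] at hb2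
        linarith
      have hfrac : b^2/(s+b^2) < p := by
        rw [div_lt_iff₀ hsb]
        nlinarith
      have hfrac0 : 0 ≤ b^2/(s+b^2) := by positivity
      have hq0 : 0 < q := by simp only [hq_def]; linarith
      have hqp : q < p := by simp only [hq_def]; linarith
      have hq1 : q < 1 := lt_trans hqp hp1
      have hq1' : (0:ℝ) < 1 - q := by linarith
      have hql : b^2/(s+b^2) < q := by simp only [hq_def]; linarith
      have hβ2 : b^2 < q*s/(1-q) := by
        rw [lt_div_iff₀ hq1']
        rw [div_lt_iff₀ hsb] at hql
        nlinarith
      set β : ℝ := Real.sqrt (q*s/(1-q)) with hβ_def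
      have hβsq : β^2 = q*s/(1-q) := Real.sq_sqrt (by positivity)
      have hbβ : b < β := (Real.lt_sqrt hb0).mpr hβ2
      have hβ0 : 0 < β := lt_of_le_of_lt hb0 hbβ
      set u : Fin n → ℝ := Sig *ᵥ a with hu_def
      set v : Fin n → ℝ := (β/s) • u with hv_def
      set w : Fin n → ℝ := (-((1-q)*β/(q*s))) • u with hw_def
      have hau : a ⬝ᵥ u = s := rfl
      have hav : a ⬝ᵥ v = β := by
        rw [hv_def, dotProduct_smul, hau, smul_eq_mul]
        field_simp
      have haw : a ⬝ᵥ w = -((1-q)*β/q) := by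
        rw [hw_def, dotProduct_smul, hau, smul_eq_mul]
        field_simp
      set μ : Measure (Fin n → ℝ) :=
        ENNReal.ofReal (1-q) • Measure.dirac v + ENNReal.ofReal q • Measure.dirac w with hμ_def
      have hprob : IsProbabilityMeasure μ := by
        constructor
        simp only [hμ_def, Measure.add_apply, Measure.smul_apply, Measure.dirac_apply' _
          MeasurableSet.univ]
        simp [← ENNReal.ofReal_add hq1'.le hq0.le]
      have hIm : ∀ (f : (Fin n → ℝ) → ℝ), Measurable f → Integrable f μ := by
        intro f hf
        exact ((aux_integrable_dirac hf v).smul_measure ENNReal.ofReal_ne_top).add_measure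
          ((aux_integrable_dirac hf w).smul_measure ENNReal.ofReal_ne_top)
      have hInt : ∀ (f : (Fin n → ℝ) → ℝ), Measurable f →
          ∫ x, f x ∂μ = (1-q) * f v + q * f w := by
        intro f hf
        rw [hμ_def, aux_integral_two_point hf _ _ ENNReal.ofReal_ne_top ENNReal.ofReal_ne_top,
          ENNReal.toReal_ofReal hq1'.le, ENNReal.toReal_ofReal hq0.le]
      have hsne : s ≠ 0 := ne_of_gt hs1
      have hqne : q ≠ 0 := ne_of_gt hq0
      have hmean : ∀ i, ∫ x, x i ∂μ = 0 := by
        intro i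
        rw [hInt _ (hpi i)]
        simp only [hv_def, hw_def, Pi.smul_apply, smul_eq_mul]
        field_simp
        ring
      have hM : (Matrix.of fun i j => ∫ x, x i * x j ∂μ) =
          Matrix.of fun i j => u i * u j / s := by
        ext i j
        rw [Matrix.of_apply, Matrix.of_apply,
          hInt _ (hpij i j)]
        simp only [hv_def, hw_def, Pi.smul_apply, smul_eq_mul]
        have : (1-q) * (β/s * u i * (β/s * u j)) + q * (-((1-q)*β/(q*s)) * u i * (-((1-q)*β/(q*s)) * u j))
            = ((1-q)*β^2/q/s^2) * (u i * u j) := by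
          field_simp
          ring
        rw [this, hβsq]
        field_simp
      have hpsd : (Sig - Matrix.of fun i j => ∫ x, x i * x j ∂μ).PosSemidef := by
        rw [hM]
        apply Matrix.PosSemidef.of_dotProduct_mulVec_nonneg
        · have hMh : (Matrix.of fun i j => u i * u j / s).IsHermitian := by
            ext i j
            simp [Matrix.conjTranspose_apply, mul_comm]
          exact hSig.1.sub hMh
        · intro x
          have hRW : x ⬝ᵥ (Matrix.of fun i j => u i * u j / s) *ᵥ x = (x ⬝ᵥ u)^2 / s := by
            have h1 : x ⬝ᵥ (Matrix.of fun i j => u i * u j / s) *ᵥ x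
                = ∑ i, ∑ j, x i * (u i * u j / s * x j) := by
              simp only [Matrix.mulVec, dotProduct, Matrix.of_apply, Finset.mul_sum]
            have h2 : (x ⬝ᵥ u)^2 / s = ∑ i, ∑ j, x i * u i * (x j * u j) / s := by
              rw [dotProduct, sq, Finset.sum_mul_sum]
              simp only [Finset.sum_div]
            rw [h1, h2]
            refine Finset.sum_congr rfl fun i _ => ?_
            refine Finset.sum_congr rfl fun j _ => ?_
            ring
          rw [star_trivial, Matrix.sub_mulVec, dotProduct_sub, hRW,
            sub_nonneg, div_le_iff₀ hs1, hu_def]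
          exact aux_psd_cs hSig a x
      have hμS : μ {x : Fin n → ℝ | a ⬝ᵥ x ≤ b} = ENNReal.ofReal q := by
        rw [hμ_def]
        simp only [Measure.add_apply, Measure.smul_apply]
        rw [Measure.dirac_apply' _ hSetm, Measure.dirac_apply' _ hSetm]
        have hv_not : v ∉ {x : Fin n → ℝ | a ⬝ᵥ x ≤ b} := by
          simp [Set.mem_setOf_eq, hav, not_le, hbβ]
        have hw_in : w ∈ {x : Fin n → ℝ | a ⬝ᵥ x ≤ b} := by
          have : -((1-q)*β/q) ≤ b := by
            have : 0 < (1-q)*β/q := by positivity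
            linarith
          simp [Set.mem_setOf_eq, haw, this]
        rw [Set.indicator_of_notMem hv_not, Set.indicator_of_mem hw_in]
        simp
      have := H μ hprob (fun i => hIm _ (hpi i))
        (fun i j => hIm _ (hpij i j)) hmean hpsd
      rw [hμS, ENNReal.toReal_ofReal hq0.le] at this
      linarith
  · -- SOC → chance constraint
    intro hsoc μ hμ hint1 hint2 hmean hL
    have hb0 : 0 ≤ b :=
      le_trans (mul_nonneg (Real.sqrt_nonneg _) (Real.sqrt_nonneg _)) hsoc
    set M : Matrix (Fin n) (Fin n) ℝ := Matrix.of fun i j => ∫ x, x i * x j ∂μ with hM_def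
    set m2 : ℝ := a ⬝ᵥ M *ᵥ a with hm2_def
    have hm2s : m2 ≤ s := by
      have h := hL.dotProduct_mulVec_nonneg a
      rw [star_trivial, Matrix.sub_mulVec, dotProduct_sub] at h
      rw [hm2_def, hs_def]
      linarith
    have hYint : Integrable (fun x => a ⬝ᵥ x) μ := by
      simp only [dotProduct]
      exact integrable_finset_sum _ fun i _ => (hint1 i).const_mul (a i)
    have hYmean : ∫ x, a ⬝ᵥ x ∂μ = 0 := by
      simp only [dotProduct]
      rw [integral_finset_sum _ fun i _ => (hint1 i).const_mul (a i)]
      simp only [integral_const_mul, hmean, mul_zero, Finset.sum_const_zero]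
    have hsq : (fun x : Fin n → ℝ => (a ⬝ᵥ x)^2) =
        fun x => ∑ i, ∑ j, (a i * a j) * (x i * x j) := by
      funext x
      simp only [dotProduct, sq, Finset.sum_mul_sum]
      exact Finset.sum_congr rfl fun i _ => Finset.sum_congr rfl fun j _ => by ring
    have hY2int : Integrable (fun x => (a ⬝ᵥ x)^2) μ := by
      rw [hsq]
      exact integrable_finset_sum _ fun i _ =>
        integrable_finset_sum _ fun j _ => (hint2 i j).const_mul _
    have hY2 : ∫ x, (a ⬝ᵥ x)^2 ∂μ = m2 := by
      rw [hsq, integral_finset_sum _ (fun i _ =>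
        integrable_finset_sum _ fun j _ => (hint2 i j).const_mul _)]
      simp only [integral_finset_sum _ fun j _ => (hint2 _ j).const_mul _, integral_const_mul]
      rw [hm2_def, hM_def]
      simp only [dotProduct, Matrix.mulVec, Matrix.of_apply, Finset.mul_sum]
      refine Finset.sum_congr rfl fun i _ => Finset.sum_congr rfl fun j _ => by ring
    have hm20 : 0 ≤ m2 := hY2 ▸ integral_nonneg fun x => sq_nonneg _
    rcases eq_or_lt_of_le hb0 with hbz | hbpos
    · -- b = 0 forces s = 0, hence a ⬝ᵥ x = 0 a.e.
      have hpp : 0 < Real.sqrt (p/(1-p)) := Real.sqrt_pos.mpr (by positivity)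
      have hsr : Real.sqrt s = 0 := by
        by_contra h
        have h1 : 0 < Real.sqrt s := lt_of_le_of_ne (Real.sqrt_nonneg _) (Ne.symm h)
        nlinarith
      have hs : s = 0 := le_antisymm (Real.sqrt_eq_zero'.mp hsr) hs0
      have hm2 : m2 = 0 := le_antisymm (hs ▸ hm2s) hm20
      have h0 : ∀ᵐ x ∂μ, (a ⬝ᵥ x)^2 = 0 := by
        have := (integral_eq_zero_iff_of_nonneg_ae
          (ae_of_all μ fun x => sq_nonneg (a ⬝ᵥ x)) hY2int).mp (hY2.trans hm2)
        filter_upwards [this] with x hx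
        exact hx
      have h1 : ∀ᵐ x ∂μ, x ∈ {x : Fin n → ℝ | a ⬝ᵥ x ≤ b} := by
        filter_upwards [h0] with x hx
        have : a ⬝ᵥ x = 0 := by
          have := sq_eq_zero_iff.mp hx
          exact this
        simp [Set.mem_setOf_eq, this, ← hbz]
      have hone : μ {x : Fin n → ℝ | a ⬝ᵥ x ≤ b} = 1 := by
        rw [← prob_compl_eq_zero_iff hSetm]
        have h2 := ae_iff.mp h1
        simpa [Set.compl_setOf] using h2
      rw [hone]
      simp
      linarith
    · -- b > 0 : Cantelli via Markov with shift u = s / b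
      set c : ℝ := s / b with hc_def
      have hc0 : 0 ≤ c := div_nonneg hs0 hbpos.le
      have hbc : 0 < b + c := by linarith
      have hZeq : (fun x : Fin n → ℝ => (a ⬝ᵥ x + c)^2) =
          fun x => (a ⬝ᵥ x)^2 + (2*c) * (a ⬝ᵥ x) + c^2 := by
        funext x; ring
      have hZint : Integrable (fun x : Fin n → ℝ => (a ⬝ᵥ x + c)^2) μ := by
        rw [hZeq]
        exact (hY2int.add (hYint.const_mul (2*c))).add (integrable_const (c^2))
      have i1 : Integrable (fun x : Fin n → ℝ => (2*c) * (a ⬝ᵥ x)) μ := hYint.const_mul (2*c)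
      have i2 : Integrable (fun x : Fin n → ℝ => (a ⬝ᵥ x)^2 + (2*c) * (a ⬝ᵥ x)) μ :=
        hY2int.add i1
      have e1 : ∫ x, ((a ⬝ᵥ x)^2 + (2*c) * (a ⬝ᵥ x) + c^2) ∂μ
          = (∫ x, ((a ⬝ᵥ x)^2 + (2*c) * (a ⬝ᵥ x)) ∂μ) + ∫ _x, c^2 ∂μ :=
        integral_add i2 (integrable_const _)
      have e2 : ∫ x, ((a ⬝ᵥ x)^2 + (2*c) * (a ⬝ᵥ x)) ∂μ
          = (∫ x, (a ⬝ᵥ x)^2 ∂μ) + ∫ x, (2*c) * (a ⬝ᵥ x) ∂μ := integral_add hY2int i1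
      have hZval : ∫ x, (a ⬝ᵥ x + c)^2 ∂μ = m2 + c^2 := by
        rw [hZeq, e1, e2, integral_const_mul, hYmean, hY2, integral_const]
        simp [measure_univ]
      have hmar := mul_meas_ge_le_integral_of_nonneg
        (ae_of_all μ fun x => sq_nonneg (a ⬝ᵥ x + c)) hZint ((b+c)^2)
      rw [hZval] at hmar
      have hsub : {x : Fin n → ℝ | b < a ⬝ᵥ x} ⊆ {x | (b+c)^2 ≤ (a ⬝ᵥ x + c)^2} := by
        intro x hx
        have hx' : b < a ⬝ᵥ x := hx
        have : b + c ≤ a ⬝ᵥ x + c := by linarith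
        exact pow_le_pow_left₀ hbc.le this 2
      have hmono : (μ {x : Fin n → ℝ | b < a ⬝ᵥ x}).toReal
          ≤ (μ {x | (b+c)^2 ≤ (a ⬝ᵥ x + c)^2}).toReal :=
        ENNReal.toReal_mono (measure_ne_top μ _) (measure_mono hsub)
      have hkey : (μ {x : Fin n → ℝ | b < a ⬝ᵥ x}).toReal ≤ (m2 + c^2)/(b+c)^2 := by
        refine le_trans hmono ?_
        rw [le_div_iff₀ (by positivity)]
        rw [measureReal_def] at hmar
        linarith [hmar]
      -- algebra : (m2 + c²)/(b+c)² ≤ 1 - p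
      have hps : p / (1-p) * s ≤ b^2 := by
        have h1 : (Real.sqrt (p/(1-p)) * Real.sqrt s)^2 ≤ b^2 :=
          pow_le_pow_left₀ (mul_nonneg (Real.sqrt_nonneg _) (Real.sqrt_nonneg _)) hsoc 2
        rwa [mul_pow, Real.sq_sqrt (by positivity), Real.sq_sqrt hs0] at h1
      have halg : (m2 + c^2)/(b+c)^2 ≤ 1 - p := by
        have hb2 : p * s ≤ (1-p) * b^2 := by
          rw [div_mul_eq_mul_div, div_le_iff₀ hp1'] at hps
          linarith
        have hbne : b ≠ 0 := ne_of_gt hbpos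
        have hc2 : c^2 * b^2 = s^2 := by
          rw [hc_def]; field_simp
        have hbc2 : (b+c)^2 * b^2 = (b^2+s)^2 := by
          rw [hc_def]; field_simp
        rw [div_le_iff₀ (by positivity)]
        have hgoal : (m2 + c^2) * b^2 ≤ (1-p)*(b+c)^2 * b^2 := by
          have h1 : (m2 + c^2) * b^2 = m2 * b^2 + s^2 := by rw [add_mul, hc2]
          have h2 : (1-p)*(b+c)^2 * b^2 = (1-p)*(b^2+s)^2 := by rw [mul_assoc, hbc2]
          rw [h1, h2]
          nlinarith [mul_le_mul_of_nonneg_right hm2s (sq_nonneg b),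
            mul_le_mul_of_nonneg_right hb2 (by positivity : (0:ℝ) ≤ b^2 + s)]
        exact le_of_mul_le_mul_right hgoal (by positivity)
      have hfin : (μ {x : Fin n → ℝ | b < a ⬝ᵥ x}).toReal ≤ 1 - p := le_trans hkey halg
      have hcompl : μ {x : Fin n → ℝ | a ⬝ᵥ x ≤ b} = 1 - μ {x : Fin n → ℝ | b < a ⬝ᵥ x} := by
        rw [show {x : Fin n → ℝ | a ⬝ᵥ x ≤ b} = {x : Fin n → ℝ | b < a ⬝ᵥ x}ᶜ by
          ext x; simp [not_lt]]
        exact prob_compl_eq_one_sub (measurableSet_lt measurable_const hYm)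
      rw [hcompl, ENNReal.toReal_sub_of_le prob_le_one ENNReal.one_ne_top, ENNReal.toReal_one]
      linarith
end

section
/- Let B̄ ∈ ℝ^{s×q}, let Ē ∈ ℝ^{s×r} have full column rank (so that its Moore–Penrose pseudoinverse Ē† satisfies Ē† Ē = I_r), let M̄ ∈ ℝ^{q×r} be such that I_q + M̄ Ē† B̄ is invertible, and let v̄ ∈ ℝ^q and c ∈ ℝ^s. Define K̄ := (I_q + M̄ Ē† B̄)^{−1} M̄ Ē† and ḡ := (I_q + M̄ Ē† B̄)^{−1} (v̄ − M̄ Ē† c). Then for every w̄ ∈ ℝ^r, the vector ū := v̄ + M̄ w̄ satisfies ū = ḡ + K̄ (c + B̄ ū + Ē w̄). In other words, the affine disturbance feedback policy ū = v̄ + M̄ w̄ and the error feedback policy ū = ḡ + K̄ x̄ generate the same input, where x̄ = c + B̄ ū + Ē w̄ is the resulting stacked state. -/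
open Matrix

/-- **Equivalence of affine disturbance feedback and error feedback.**
Let `Ē` have full column rank with Moore–Penrose pseudoinverse `Ē†` (so that the
four Penrose conditions hold and `Ē† Ē = I`), let `I + M̄ Ē† B̄` be invertible and
set `K̄ = (I + M̄ Ē† B̄)⁻¹ M̄ Ē†` and `ḡ = (I + M̄ Ē† B̄)⁻¹ (v̄ − M̄ Ē† c)`. Then for
every `w̄`, the disturbance feedback input `ū = v̄ + M̄ w̄` satisfies
`ū = ḡ + K̄ (c + B̄ ū + Ē w̄)`, i.e. both policies generate the same input along
the stacked state `x̄ = c + B̄ ū + Ē w̄`. -/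
theorem sadf_eq_error_feedback {s q r : ℕ}
    (Bbar : Matrix (Fin s) (Fin q) ℝ) (Ebar : Matrix (Fin s) (Fin r) ℝ)
    (Edag : Matrix (Fin r) (Fin s) ℝ)
    (hpen1 : Ebar * Edag * Ebar = Ebar)
    (hpen2 : Edag * Ebar * Edag = Edag)
    (hpen3 : (Ebar * Edag)ᵀ = Ebar * Edag)
    (hpen4 : (Edag * Ebar)ᵀ = Edag * Ebar)
    (hfullrank : Edag * Ebar = 1)
    (M : Matrix (Fin q) (Fin r) ℝ) (v : Fin q → ℝ) (c : Fin s → ℝ)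
    (hinv : IsUnit (1 + M * Edag * Bbar))
    (K : Matrix (Fin q) (Fin s) ℝ)
    (hK : K = (1 + M * Edag * Bbar)⁻¹ * (M * Edag))
    (g : Fin q → ℝ)
    (hg : g = ((1 + M * Edag * Bbar)⁻¹).mulVec (v - M.mulVec (Edag.mulVec c)))
    (w : Fin r → ℝ) :
    v + M.mulVec w =
      g + K.mulVec (c + Bbar.mulVec (v + M.mulVec w) + Ebar.mulVec w) := by
  subst hK hg
  set A : Matrix (Fin q) (Fin q) ℝ := 1 + M * Edag * Bbar with hA
  set u : Fin q → ℝ := v + M.mulVec w with hu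
  have hdet : IsUnit A.det := (Matrix.isUnit_iff_isUnit_det A).mp hinv
  have hAinv : A⁻¹ * A = 1 := Matrix.nonsing_inv_mul A hdet
  have key : (v - M.mulVec (Edag.mulVec c)) +
      (M * Edag).mulVec (c + Bbar.mulVec u + Ebar.mulVec w) = A.mulVec u := by
    have h1 : (M * Edag).mulVec (Ebar.mulVec w) = M.mulVec w := by
      rw [Matrix.mulVec_mulVec, Matrix.mul_assoc, hfullrank, Matrix.mul_one]
    have h2 : (M * Edag).mulVec c = M.mulVec (Edag.mulVec c) := by
      rw [Matrix.mulVec_mulVec]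
    have h3 : A.mulVec u = u + (M * Edag * Bbar).mulVec u := by
      rw [hA, Matrix.add_mulVec, Matrix.one_mulVec]
    have h4 : (M * Edag * Bbar).mulVec u = (M * Edag).mulVec (Bbar.mulVec u) := by
      rw [Matrix.mulVec_mulVec]
    rw [Matrix.mulVec_add, Matrix.mulVec_add, h1, h2, h3, h4, hu]
    abel
  calc u = (1 : Matrix (Fin q) (Fin q) ℝ).mulVec u := by rw [Matrix.one_mulVec]
    _ = (A⁻¹ * A).mulVec u := by rw [hAinv]
    _ = A⁻¹.mulVec (A.mulVec u) := by rw [Matrix.mulVec_mulVec]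
    _ = A⁻¹.mulVec ((v - M.mulVec (Edag.mulVec c)) +
          (M * Edag).mulVec (c + Bbar.mulVec u + Ebar.mulVec w)) := by rw [key]
    _ = A⁻¹.mulVec (v - M.mulVec (Edag.mulVec c)) +
          (A⁻¹ * (M * Edag)).mulVec (c + Bbar.mulVec u + Ebar.mulVec w) := by
        simp [Matrix.mulVec_add, Matrix.mulVec_mulVec, Matrix.mul_assoc]
end
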